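/- Let Z₁, …, Z_p be generated by a (time-inhomogeneous) Markov chain. Then ‖law(Z₁,…,Z_p) − law(Z₁,…,Z_{p−1}) ⊗ law(Z_p)‖_TV = ‖law(Z_{p−1}, Z_p) − law(Z_{p−1}) ⊗ law(Z_p)‖_TV. -/

import Mathlib

open MeasureTheory Set
open scoped ENNReal

noncomputable section

/-- Total-variation distance between two measures, as the supremum over measurable sets of the
discrepancy of the measure assigned to the set. -/
def tvDist {α : Type*} [MeasurableSpace α] (μ ν : Measure α) : ℝ :=
  ⨆ A : {A : Set α // MeasurableSet A}, |(μ A.1).toReal - (ν A.1).toReal|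

/-!
The two laws on the left are `μWX` composed with kernels that read `(W, Z_{p-1})` only through
`f = Prod.snd`, and the two laws on the right are their images under `f × id`; an image never has
larger total variation. Conversely, on a set `{(ω, z) | ω ∈ V (e z)}` built from a finite
measurable partition `e` of the last coordinate, the discrepancy between `ρ ⊗ κ₁ ∘ f` and
`ρ ⊗ κ₂ ∘ f` is `∑ i, ∫_{V i} (κ₁ (f ω) - κ₂ (f ω)) (e⁻¹{i}) dρ`. Replacing each `V i` by the set
where the integrand is positive only increases it, and that set is a preimage under `f`, so the
improved set is a preimage under `f × id`. Such partition sets form a ring generating the product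
σ-algebra, hence approximate every measurable set.
-/
open ProbabilityTheory
open scoped symmDiff

section TVDist

variable {X Y : Type*} [MeasurableSpace X] [MeasurableSpace Y]

lemma tvDist_comm (μ ν : Measure X) : tvDist μ ν = tvDist ν μ := by
  simp only [tvDist, abs_sub_comm]

lemma abs_measureReal_sub_le_tvDist (μ ν : Measure X) [IsFiniteMeasure μ] [IsFiniteMeasure ν]
    {A : Set X} (hA : MeasurableSet A) : |μ.real A - ν.real A| ≤ tvDist μ ν := by
  refine le_ciSup (f := fun A : {A : Set X // MeasurableSet A} => |μ.real A.1 - ν.real A.1|)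
    ⟨μ.real univ + ν.real univ, ?_⟩ ⟨A, hA⟩
  rintro _ ⟨B, rfl⟩
  have := measureReal_mono (μ := μ) (subset_univ B.1)
  have := measureReal_mono (μ := ν) (subset_univ B.1)
  exact abs_sub_le_iff.2 ⟨by linarith [measureReal_nonneg (μ := ν) (s := B.1)],
    by linarith [measureReal_nonneg (μ := μ) (s := B.1)]⟩

lemma tvDist_le_of_forall_measureReal_sub_le {μ ν : Measure X} {c : ℝ}
    (h₁ : ∀ A, MeasurableSet A → μ.real A - ν.real A ≤ c)
    (h₂ : ∀ A, MeasurableSet A → ν.real A - μ.real A ≤ c) : tvDist μ ν ≤ c :=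
  have : Nonempty {A : Set X // MeasurableSet A} := ⟨⟨∅, .empty⟩⟩
  ciSup_le fun A => abs_sub_le_iff.2 ⟨h₁ A.1 A.2, h₂ A.1 A.2⟩

lemma tvDist_map_le (μ ν : Measure X) [IsFiniteMeasure μ] [IsFiniteMeasure ν] {g : X → Y}
    (hg : Measurable g) : tvDist (μ.map g) (ν.map g) ≤ tvDist μ ν := by
  have : Nonempty {B : Set Y // MeasurableSet B} := ⟨⟨∅, .empty⟩⟩
  refine ciSup_le fun B => ?_
  rw [← measureReal_def, ← measureReal_def, map_measureReal_apply hg B.2,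
    map_measureReal_apply hg B.2]
  exact abs_measureReal_sub_le_tvDist μ ν (hg B.2)

end TVDist

section FinPartitionSets

variable {Ω α : Type*}

/-- `e` cuts `α` into finitely many measurable cells, over each of which the set has the same
measurable section `V i`. -/
def finPartitionSets (Ω α : Type*) [MeasurableSpace Ω] [MeasurableSpace α] :
    Set (Set (Ω × α)) :=
  {A | ∃ (ι : Type) (_ : Finite ι) (e : α → ι) (V : ι → Set Ω),
    (∀ i, MeasurableSet (e ⁻¹' {i})) ∧ (∀ i, MeasurableSet (V i)) ∧ A = {q | q.1 ∈ V (e q.2)}}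

lemma setOf_mem_comp_eq_iUnion {ι : Type*} (e : α → ι) (V : ι → Set Ω) :
    {q : Ω × α | q.1 ∈ V (e q.2)} = ⋃ i, V i ×ˢ (e ⁻¹' {i}) := by
  ext q
  simp

lemma pairwise_disjoint_prod_preimage_singleton {ι : Type*} (e : α → ι) (V : ι → Set Ω) :
    Pairwise (Function.onFun Disjoint fun i => V i ×ˢ (e ⁻¹' {i})) := fun _ _ hij =>
  disjoint_prod.2 (Or.inr ((disjoint_singleton.2 hij).preimage e))

variable [MeasurableSpace Ω] [MeasurableSpace α]

lemma measurableSet_of_mem_finPartitionSets {A : Set (Ω × α)}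
    (hA : A ∈ finPartitionSets Ω α) : MeasurableSet A := by
  obtain ⟨ι, _, e, V, he, hV, rfl⟩ := hA
  rw [setOf_mem_comp_eq_iUnion]
  exact .iUnion fun i => (hV i).prod (he i)

lemma prod_mem_finPartitionSets {U : Set Ω} {F : Set α} (hU : MeasurableSet U)
    (hF : MeasurableSet F) : U ×ˢ F ∈ finPartitionSets Ω α := by
  refine ⟨Prop, inferInstance, (· ∈ F), fun P => {ω | ω ∈ U ∧ P}, fun P => ?_, fun P => ?_, rfl⟩
  · by_cases hP : P
    · simpa [hP] using hF
    · convert hF.compl using 1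
      ext
      simp [hP]
  · by_cases hP : P <;> simp [hP, hU]

lemma setOf_mem_finPartitionSets_of_op {A B : Set (Ω × α)} (hA : A ∈ finPartitionSets Ω α)
    (hB : B ∈ finPartitionSets Ω α) (op : Prop → Prop → Prop)
    (hop : ∀ S T : Set Ω, MeasurableSet S → MeasurableSet T →
      MeasurableSet {ω | op (ω ∈ S) (ω ∈ T)}) :
    {q | op (q ∈ A) (q ∈ B)} ∈ finPartitionSets Ω α := by
  obtain ⟨ι, _, e, V, he, hV, rfl⟩ := hA
  obtain ⟨ι', _, e', V', he', hV', rfl⟩ := hB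
  refine ⟨ι × ι', inferInstance, fun z => (e z, e' z),
    fun i => {ω | op (ω ∈ V i.1) (ω ∈ V' i.2)}, fun i => ?_, fun i => hop _ _ (hV _) (hV' _), rfl⟩
  convert (he i.1).inter (he' i.2) using 1
  ext z
  simp [Prod.ext_iff]

lemma isSetRing_finPartitionSets : IsSetRing (finPartitionSets Ω α) where
  empty_mem := by
    simpa using prod_mem_finPartitionSets (U := (∅ : Set Ω)) (F := (∅ : Set α)) .empty .empty
  union_mem _ _ hA hB := setOf_mem_finPartitionSets_of_op hA hB (· ∨ ·) fun _ _ => .union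
  sdiff_mem _ _ hA hB := setOf_mem_finPartitionSets_of_op hA hB (fun a b => a ∧ ¬ b)
    fun _ _ => .diff

lemma generateFrom_finPartitionSets :
    MeasurableSpace.generateFrom (finPartitionSets Ω α) = Prod.instMeasurableSpace := by
  refine le_antisymm
    (MeasurableSpace.generateFrom_le fun _ => measurableSet_of_mem_finPartitionSets) ?_
  rw [← generateFrom_prod]
  refine MeasurableSpace.generateFrom_mono ?_
  rintro _ ⟨U, hU, F, hF, rfl⟩
  exact prod_mem_finPartitionSets hU hF

lemma exists_mem_finPartitionSets_measure_symmDiff_lt (μ : Measure (Ω × α)) [IsFiniteMeasure μ]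
    {A : Set (Ω × α)} (hA : MeasurableSet A) {ε : ℝ≥0∞} (hε : 0 < ε) :
    ∃ A' ∈ finPartitionSets Ω α, μ (A' ∆ A) < ε := by
  have huniv : univ ∈ finPartitionSets Ω α := by
    simpa using prod_mem_finPartitionSets (U := (univ : Set Ω)) (F := (univ : Set α)) .univ .univ
  exact exists_measure_symmDiff_lt_of_generateFrom_isSetRing isSetRing_finPartitionSets
    ⟨{univ}, countable_singleton _, by simpa using huniv, by simp⟩
    generateFrom_finPartitionSets.symm hA hε

lemma compProd_apply_setOf_mem_comp {ι : Type*} [Fintype ι] (ρ : Measure Ω) [SFinite ρ]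
    (κ : Kernel Ω α) [IsSFiniteKernel κ] {e : α → ι} {V : ι → Set Ω}
    (he : ∀ i, MeasurableSet (e ⁻¹' {i})) (hV : ∀ i, MeasurableSet (V i)) :
    (ρ ⊗ₘ κ) {q | q.1 ∈ V (e q.2)} = ∑ i, ∫⁻ ω in V i, κ ω (e ⁻¹' {i}) ∂ρ := by
  rw [setOf_mem_comp_eq_iUnion, measure_iUnion (pairwise_disjoint_prod_preimage_singleton e V)
    fun i => (hV i).prod (he i), tsum_fintype]
  exact Finset.sum_congr rfl fun i _ => Measure.compProd_apply_prod (hV i) (he i)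

end FinPartitionSets

/-- Pointwise, `1_V a + 1_W b ≤ 1_W a + 1_V b` for `W = {b < a}`: off `W` we have `a ≤ b`. -/
lemma setLIntegral_add_setLIntegral_lt_le {Ω : Type*} [MeasurableSpace Ω] (ρ : Measure Ω)
    {a b : Ω → ℝ≥0∞} (ha : Measurable a) (hb : Measurable b) {V : Set Ω} (hV : MeasurableSet V) :
    ∫⁻ ω in V, a ω ∂ρ + ∫⁻ ω in {ω | b ω < a ω}, b ω ∂ρ
      ≤ ∫⁻ ω in {ω | b ω < a ω}, a ω ∂ρ + ∫⁻ ω in V, b ω ∂ρ := by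
  have hW : MeasurableSet {ω | b ω < a ω} := measurableSet_lt hb ha
  simp only [← lintegral_indicator hV, ← lintegral_indicator hW]
  rw [← lintegral_add_left (ha.indicator hV), ← lintegral_add_left (ha.indicator hW)]
  refine lintegral_mono fun ω => ?_
  by_cases hωV : ω ∈ V <;> by_cases hωW : b ω < a ω
  · simp [hωV, hωW]
  · simp [hωV, hωW, not_lt.1 hωW]
  · simp [hωV, hωW, hωW.le]
  · simp [hωV, hωW]

section CompProdComap

variable {Ω α γ : Type*} [MeasurableSpace Ω] [MeasurableSpace α] [MeasurableSpace γ]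

lemma map_compProd_comap (ρ : Measure Ω) [SFinite ρ] {f : Ω → α} (hf : Measurable f)
    (κ : Kernel α γ) [IsSFiniteKernel κ] :
    (ρ ⊗ₘ κ.comap f hf).map (Prod.map f id) = ρ.map f ⊗ₘ κ := by
  ext s hs
  rw [Measure.map_apply (hf.prodMap measurable_id) hs, Measure.compProd_apply hs,
    Measure.compProd_apply (hs.preimage (hf.prodMap measurable_id)),
    lintegral_map (Kernel.measurable_kernel_prodMk_left hs) hf]
  rfl

variable {ρ : Measure Ω} [IsFiniteMeasure ρ] {f : Ω → α} (hf : Measurable f)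
  (κ₁ κ₂ : Kernel α γ) [IsFiniteKernel κ₁] [IsFiniteKernel κ₂]

lemma measureReal_compProd_comap_sub_le_tvDist_of_mem_finPartitionSets {A : Set (Ω × γ)}
    (hA : A ∈ finPartitionSets Ω γ) :
    (ρ ⊗ₘ κ₁.comap f hf).real A - (ρ ⊗ₘ κ₂.comap f hf).real A
      ≤ tvDist (ρ.map f ⊗ₘ κ₁) (ρ.map f ⊗ₘ κ₂) := by
  obtain ⟨ι, _, e, V, he, hV, rfl⟩ := hA
  have := Fintype.ofFinite ι
  let G : ι → Set α := fun i => {x | κ₂ x (e ⁻¹' {i}) < κ₁ x (e ⁻¹' {i})}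
  have hG i : MeasurableSet (G i) :=
    measurableSet_lt (κ₂.measurable_coe (he i)) (κ₁.measurable_coe (he i))
  let B : Set (α × γ) := {p | p.1 ∈ G (e p.2)}
  have hB : MeasurableSet B :=
    measurableSet_of_mem_finPartitionSets ⟨ι, inferInstance, e, G, he, hG, rfl⟩
  have hνB (κ : Kernel α γ) [IsFiniteKernel κ] :
      (ρ.map f ⊗ₘ κ) B = ∑ i, ∫⁻ ω in f ⁻¹' G i, κ (f ω) (e ⁻¹' {i}) ∂ρ := by
    rw [← map_compProd_comap ρ hf κ, Measure.map_apply (hf.prodMap measurable_id) hB]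
    exact compProd_apply_setOf_mem_comp ρ _ he fun i => hf (hG i)
  have hμA (κ : Kernel α γ) [IsFiniteKernel κ] :
      (ρ ⊗ₘ κ.comap f hf) {q | q.1 ∈ V (e q.2)}
        = ∑ i, ∫⁻ ω in V i, κ (f ω) (e ⁻¹' {i}) ∂ρ :=
    compProd_apply_setOf_mem_comp ρ _ he hV
  have key : (ρ ⊗ₘ κ₁.comap f hf) {q | q.1 ∈ V (e q.2)} + (ρ.map f ⊗ₘ κ₂) B
      ≤ (ρ.map f ⊗ₘ κ₁) B + (ρ ⊗ₘ κ₂.comap f hf) {q | q.1 ∈ V (e q.2)} := by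
    rw [hμA, hμA, hνB, hνB, ← Finset.sum_add_distrib, ← Finset.sum_add_distrib]
    exact Finset.sum_le_sum fun i _ => setLIntegral_add_setLIntegral_lt_le ρ
      ((κ₁.measurable_coe (he i)).comp hf) ((κ₂.measurable_coe (he i)).comp hf) (hV i)
  have key_real := ENNReal.toReal_mono (by finiteness) key
  rw [ENNReal.toReal_add (by finiteness) (by finiteness),
    ENNReal.toReal_add (by finiteness) (by finiteness)] at key_real
  calc _ ≤ (ρ.map f ⊗ₘ κ₁).real B - (ρ.map f ⊗ₘ κ₂).real B := by
        simp only [measureReal_def]; linarith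
    _ ≤ _ := (le_abs_self _).trans (abs_measureReal_sub_le_tvDist _ _ hB)

lemma measureReal_compProd_comap_sub_le_tvDist {A : Set (Ω × γ)} (hA : MeasurableSet A) :
    (ρ ⊗ₘ κ₁.comap f hf).real A - (ρ ⊗ₘ κ₂.comap f hf).real A
      ≤ tvDist (ρ.map f ⊗ₘ κ₁) (ρ.map f ⊗ₘ κ₂) := by
  set μ₁ := ρ ⊗ₘ κ₁.comap f hf
  set μ₂ := ρ ⊗ₘ κ₂.comap f hf
  refine le_of_forall_pos_lt_add fun ε hε => ?_
  obtain ⟨A', hA', hA'A⟩ :=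
    exists_mem_finPartitionSets_measure_symmDiff_lt (μ₁ + μ₂) hA (ENNReal.ofReal_pos.2 hε)
  have hA'A_real : μ₁.real (A' ∆ A) + μ₂.real (A' ∆ A) < ε := by
    rw [← measureReal_add_apply]
    exact ENNReal.toReal_lt_of_lt_ofReal hA'A
  have hA'm := measurableSet_of_mem_finPartitionSets hA'
  have h₁ := abs_le.1 (abs_measureReal_sub_le_measureReal_symmDiff (μ := μ₁)
    hA'm.nullMeasurableSet hA.nullMeasurableSet)
  have h₂ := abs_le.1 (abs_measureReal_sub_le_measureReal_symmDiff (μ := μ₂)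
    hA'm.nullMeasurableSet hA.nullMeasurableSet)
  linarith [measureReal_compProd_comap_sub_le_tvDist_of_mem_finPartitionSets (ρ := ρ) hf κ₁ κ₂ hA']

lemma tvDist_compProd_comap :
    tvDist (ρ ⊗ₘ κ₁.comap f hf) (ρ ⊗ₘ κ₂.comap f hf)
      = tvDist (ρ.map f ⊗ₘ κ₁) (ρ.map f ⊗ₘ κ₂) := by
  apply le_antisymm
  · refine tvDist_le_of_forall_measureReal_sub_le
      (fun _ => measureReal_compProd_comap_sub_le_tvDist hf κ₁ κ₂) fun _ hA => ?_
    rw [tvDist_comm]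
    exact measureReal_compProd_comap_sub_le_tvDist hf κ₂ κ₁ hA
  · rw [← map_compProd_comap ρ hf κ₁, ← map_compProd_comap ρ hf κ₂]
    exact tvDist_map_le _ _ (hf.prodMap measurable_id)

end CompProdComap

/-- `μWX` is the law of `((Z₁,…,Z_{p-2}), Z_{p-1})` and `κ` the transition kernel from `Z_{p-1}`
to `Z_p`, so `μ` is the law of `((Z₁,…,Z_{p-2}), Z_{p-1}, Z_p)`. -/
theorem markov_tv_factorization {β α : Type*} [MeasurableSpace β] [MeasurableSpace α]
    (μWX : Measure (β × α)) [IsProbabilityMeasure μWX]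
    (κ : ProbabilityTheory.Kernel α α) [ProbabilityTheory.IsMarkovKernel κ]
    (μ : Measure ((β × α) × α))
    (hμ : μ = μWX.compProd (κ.comap Prod.snd measurable_snd)) :
    tvDist μ (μWX.prod (μ.map (fun q => q.2)))
      = tvDist (μ.map (fun q => (q.1.2, q.2)))
          ((μ.map (fun q => q.1.2)).prod (μ.map (fun q => q.2))) := by
  subst hμ
  set lawZp := (μWX ⊗ₘ κ.comap Prod.snd measurable_snd).map (fun q => q.2)
  have law_pair : (μWX ⊗ₘ κ.comap Prod.snd measurable_snd).map (fun q => (q.1.2, q.2))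
      = μWX.map Prod.snd ⊗ₘ κ :=
    map_compProd_comap μWX measurable_snd κ
  have law_Zpred : (μWX ⊗ₘ κ.comap Prod.snd measurable_snd).map (fun q => q.1.2)
      = μWX.map Prod.snd := by
    rw [← Function.comp_def, ← Measure.map_map measurable_snd measurable_fst, ← Measure.fst,
      Measure.fst_compProd]
  rw [law_pair, law_Zpred, ← Measure.compProd_const, ← Measure.compProd_const]
  -- `Kernel.const (β × α) ν` is definitionally `(Kernel.const α ν).comap Prod.snd _`.
  exact tvDist_compProd_comap measurable_snd κ (Kernel.const α lawZp)
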